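/- arXiv:2505.08615 — 2 statements merged into one kernel-verified Lean document; each statement's English description precedes it below -/
import Mathlib

section
/- Let (Ω, ℙ) be a probability space, let m, K, N, T be positive integers and τ ∈ [0, 1). Let f_t : Ω → ℝ^m (t = 1, …, T) and e_{i,t} : Ω → ℝ^K (i = 1, …, N, t = 1, …, T) be square-integrable random vectors, and set ē_t = N^{-1} Σ_{i=1}^N e_{i,t}. Assume that for each t the random vector f_t is independent of ē_t, and that (1/T^{1+τ}) Σ_{t=1}^T E‖f_t‖² ≤ C_f and (1/T) Σ_{t=1}^T E(‖√N ē_t‖²) ≤ C_e for constants C_f, C_e ≥ 0. Then for every ε > 0, ℙ( ‖ (1/T^{1+τ}) Σ_{t=1}^T f_t ē_t′ ‖_F > ε ) ≤ √(C_f · C_e) / (ε · √N · T^{τ/2}). In particular, ‖T^{-(1+τ)} Σ_t f_t ē_t′‖_F is bounded in probability at rate N^{-1/2} T^{-τ/2}. -/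
/-!
The Frobenius norm of `Σ_t f_t ē_t′` is at most `Σ_t ‖f_t‖ ‖ē_t‖`, because `‖a b′‖_F ≤ ‖a‖ ‖b‖`.
Markov's inequality therefore reduces the claim to a bound on `E Σ_t ‖f_t‖ ‖ē_t‖`, and
Cauchy–Schwarz, first in `ω` and then in `t`, bounds this by
`(Σ_t E‖f_t‖²)^{1/2} (Σ_t E‖ē_t‖²)^{1/2} ≤ (C_f T^{1+τ})^{1/2} (C_e T / N)^{1/2}`.
-/

open MeasureTheory ProbabilityTheory

section Frobenius

attribute [local instance] Matrix.frobeniusNormedAddCommGroup Matrix.frobeniusNormedSpace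

variable {m n : Type*} [Fintype m] [Fintype n]

lemma Matrix.frobenius_norm_eq_sqrt_sum_sq (A : Matrix m n ℝ) :
    ‖A‖ = √(∑ i, ∑ j, A i j ^ 2) := by
  simp [Matrix.frobenius_norm_def, Real.sqrt_eq_rpow]

lemma Matrix.frobenius_norm_vecMulVec_le (a : EuclideanSpace ℝ m) (b : EuclideanSpace ℝ n) :
    ‖vecMulVec a b‖ ≤ ‖a‖ * ‖b‖ := by
  rw [vecMulVec_eq Unit]
  calc _ ≤ ‖replicateCol Unit a‖ * ‖replicateRow Unit b‖ := frobenius_norm_mul _ _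
    _ = ‖a‖ * ‖b‖ := by simp

lemma sqrt_sum_sq_mul_sum_mul_le {ι : Type*} (s : Finset ι) (a : ι → EuclideanSpace ℝ m)
    (b : ι → EuclideanSpace ℝ n) {c : ℝ} (hc : 0 ≤ c) :
    √(∑ j, ∑ l, (c * ∑ t ∈ s, a t j * b t l) ^ 2) ≤ c * ∑ t ∈ s, ‖a t‖ * ‖b t‖ := by
  have hM : Matrix.of (fun j l => c * ∑ t ∈ s, a t j * b t l)
      = c • ∑ t ∈ s, Matrix.vecMulVec (a t) (b t) := by
    ext j l
    simp [Matrix.sum_apply, Matrix.vecMulVec_apply]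
  calc √(∑ j, ∑ l, (c * ∑ t ∈ s, a t j * b t l) ^ 2)
      = ‖c • ∑ t ∈ s, Matrix.vecMulVec (a t) (b t)‖ := by
        rw [← hM, Matrix.frobenius_norm_eq_sqrt_sum_sq]
        rfl
    _ ≤ c * ∑ t ∈ s, ‖Matrix.vecMulVec (a t) (b t)‖ := by
        rw [norm_smul, Real.norm_of_nonneg hc]
        exact mul_le_mul_of_nonneg_left (norm_sum_le _ _) hc
    _ ≤ c * ∑ t ∈ s, ‖a t‖ * ‖b t‖ := by
        gcongr with t
        exact Matrix.frobenius_norm_vecMulVec_le _ _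

end Frobenius

section Moments

variable {Ω E F : Type*} [MeasurableSpace Ω] {μ : Measure Ω}
  [NormedAddCommGroup E] [NormedAddCommGroup F]

lemma integral_norm_mul_norm_le_sqrt_mul_sqrt {X : Ω → E} {Y : Ω → F}
    (hX : MemLp X 2 μ) (hY : MemLp Y 2 μ) :
    ∫ ω, ‖X ω‖ * ‖Y ω‖ ∂μ ≤ √(∫ ω, ‖X ω‖ ^ 2 ∂μ) * √(∫ ω, ‖Y ω‖ ^ 2 ∂μ) := by
  have h := integral_mul_le_Lp_mul_Lq_of_nonneg Real.HolderConjugate.two_two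
    (.of_forall fun ω => norm_nonneg (X ω)) (.of_forall fun ω => norm_nonneg (Y ω))
    (by simpa using hX.norm) (by simpa using hY.norm)
  simpa only [Real.rpow_two, Real.sqrt_eq_rpow] using h

lemma integral_sum_norm_mul_norm_le {ι : Type*} (s : Finset ι) {X : ι → Ω → E} {Y : ι → Ω → F}
    (hX : ∀ t, MemLp (X t) 2 μ) (hY : ∀ t, MemLp (Y t) 2 μ) :
    ∫ ω, ∑ t ∈ s, ‖X t ω‖ * ‖Y t ω‖ ∂μ
      ≤ √(∑ t ∈ s, ∫ ω, ‖X t ω‖ ^ 2 ∂μ) * √(∑ t ∈ s, ∫ ω, ‖Y t ω‖ ^ 2 ∂μ) := by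
  have hXY : ∀ t ∈ s, Integrable (fun ω => ‖X t ω‖ * ‖Y t ω‖) μ :=
    fun t _ => (hX t).norm.integrable_mul (hY t).norm
  rw [integral_finsetSum s hXY]
  calc ∑ t ∈ s, ∫ ω, ‖X t ω‖ * ‖Y t ω‖ ∂μ
      ≤ ∑ t ∈ s, √(∫ ω, ‖X t ω‖ ^ 2 ∂μ) * √(∫ ω, ‖Y t ω‖ ^ 2 ∂μ) :=
        Finset.sum_le_sum fun t _ => integral_norm_mul_norm_le_sqrt_mul_sqrt (hX t) (hY t)
    _ ≤ _ := Real.sum_sqrt_mul_sqrt_le s (fun t => integral_nonneg fun _ => by positivity)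
        (fun t => integral_nonneg fun _ => by positivity)

end Moments

lemma measureReal_lt_le_integral_div {Ω : Type*} [MeasurableSpace Ω] {μ : Measure Ω}
    [IsFiniteMeasure μ] {Z g : Ω → ℝ} (hZg : ∀ ω, Z ω ≤ g ω) (hg0 : ∀ ω, 0 ≤ g ω)
    (hg : Integrable g μ) {ε : ℝ} (hε : 0 < ε) :
    μ.real {ω | ε < Z ω} ≤ (∫ ω, g ω ∂μ) / ε := by
  rw [le_div_iff₀' hε]
  calc ε * μ.real {ω | ε < Z ω} ≤ ε * μ.real {ω | ε ≤ g ω} := by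
        gcongr ε * ?_
        exact measureReal_mono (fun ω (hω : ε < Z ω) => hω.le.trans (hZg ω))
    _ ≤ ∫ ω, g ω ∂μ := mul_meas_ge_le_integral_of_nonneg (.of_forall hg0) hg ε

lemma Real.sqrt_rpow_one_add {x : ℝ} (hx : 0 < x) (τ : ℝ) :
    √(x ^ (1 + τ)) = √x * x ^ (τ / 2) := by
  rw [Real.sqrt_eq_rpow, Real.sqrt_eq_rpow, ← Real.rpow_mul hx.le, ← Real.rpow_add hx]
  ring_nf

lemma one_div_rpow_mul_sqrt_mul_sqrt {T N : ℝ} (hT : 0 < T) (hN : 0 < N) (τ A B : ℝ) :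
    1 / T ^ (1 + τ) * (√A * √B)
      = √(1 / T ^ (1 + τ) * A) * √(1 / T * (N * B)) / (√N * T ^ (τ / 2)) := by
  have hsq : T ^ (1 + τ) = (√T * T ^ (τ / 2)) ^ 2 := by
    rw [← Real.sqrt_rpow_one_add hT, Real.sq_sqrt (by positivity)]
  rw [Real.sqrt_mul (by positivity), Real.sqrt_mul (by positivity), Real.sqrt_mul hN.le, hsq,
    ← one_div_pow, Real.sqrt_sq (by positivity), one_div T, Real.sqrt_inv]
  field_simp

theorem stmt_0_general {Ω : Type*} [MeasurableSpace Ω] (μ : Measure Ω) [IsProbabilityMeasure μ]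
    (m K N T : ℕ) (hN : 0 < N) (hT : 0 < T)
    (τ : ℝ)
    (f : Fin T → Ω → EuclideanSpace ℝ (Fin m))
    (e : Fin N → Fin T → Ω → EuclideanSpace ℝ (Fin K))
    (ebar : Fin T → Ω → EuclideanSpace ℝ (Fin K))
    (hebar : ∀ t ω, ebar t ω = (N : ℝ)⁻¹ • ∑ i, e i t ω)
    (hf2 : ∀ t, MemLp (f t) 2 μ)
    (he2 : ∀ i t, MemLp (e i t) 2 μ)
    (Cf Ce : ℝ) (hCf : 0 ≤ Cf)
    (hMf : (1 / (T : ℝ) ^ (1 + τ)) * ∑ t, ∫ ω, ‖f t ω‖ ^ 2 ∂μ ≤ Cf)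
    (hMe : (1 / (T : ℝ)) * ∑ t, ∫ ω, ‖Real.sqrt (N : ℝ) • ebar t ω‖ ^ 2 ∂μ ≤ Ce)
    (ε : ℝ) (hε : 0 < ε) :
    (μ {ω | Real.sqrt (∑ j, ∑ l,
        ((1 / (T : ℝ) ^ (1 + τ)) * ∑ t, f t ω j * ebar t ω l) ^ 2) > ε}).toReal
      ≤ Real.sqrt (Cf * Ce) / (ε * Real.sqrt (N : ℝ) * (T : ℝ) ^ (τ / 2)) := by
  have hT0 : (0 : ℝ) < T := by exact_mod_cast hT
  have hN0 : (0 : ℝ) < N := by exact_mod_cast hN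
  set c := 1 / (T : ℝ) ^ (1 + τ)
  have hc : 0 ≤ c := by positivity
  have hebar2 (t : Fin T) : MemLp (ebar t) 2 μ := by
    rw [funext (hebar t)]
    exact (memLp_finsetSum _ fun i _ => he2 i t).const_smul (N : ℝ)⁻¹
  set A := ∑ t, ∫ ω, ‖f t ω‖ ^ 2 ∂μ
  set B := ∑ t, ∫ ω, ‖ebar t ω‖ ^ 2 ∂μ
  have hB : 1 / (T : ℝ) * (N * B) ≤ Ce := by
    simpa only [norm_smul, mul_pow, Real.norm_of_nonneg (Real.sqrt_nonneg _),
      Real.sq_sqrt hN0.le, integral_const_mul, ← Finset.mul_sum] using hMe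
  have hg : Integrable (fun ω => c * ∑ t, ‖f t ω‖ * ‖ebar t ω‖) μ :=
    (integrable_finsetSum _ fun t _ => (hf2 t).norm.integrable_mul (hebar2 t).norm).const_mul c
  calc (μ {ω | √(∑ j, ∑ l, (c * ∑ t, f t ω j * ebar t ω l) ^ 2) > ε}).toReal
      ≤ (∫ ω, c * ∑ t, ‖f t ω‖ * ‖ebar t ω‖ ∂μ) / ε :=
        measureReal_lt_le_integral_div (fun ω => sqrt_sum_sq_mul_sum_mul_le _ _ _ hc)
          (fun ω => by positivity) hg hε
    _ ≤ c * (√A * √B) / ε := by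
        rw [integral_const_mul]
        gcongr
        exact integral_sum_norm_mul_norm_le _ hf2 hebar2
    _ = √(c * A) * √(1 / T * (N * B)) / (ε * √N * (T : ℝ) ^ (τ / 2)) := by
        rw [one_div_rpow_mul_sqrt_mul_sqrt hT0 hN0, div_div, mul_assoc ε, mul_comm ε]
    _ ≤ √Cf * √Ce / (ε * √N * (T : ℝ) ^ (τ / 2)) := by gcongr
    _ = √(Cf * Ce) / (ε * √N * (T : ℝ) ^ (τ / 2)) := by rw [Real.sqrt_mul hCf]

/-- Lemma A.1: Markov-type bound for the normalized factor/average cross-product. -/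
theorem stmt_0 {Ω : Type*} [MeasurableSpace Ω] (μ : Measure Ω) [IsProbabilityMeasure μ]
    (m K N T : ℕ) (hm : 0 < m) (hK : 0 < K) (hN : 0 < N) (hT : 0 < T)
    (τ : ℝ) (hτ0 : 0 ≤ τ) (hτ1 : τ < 1)
    (f : Fin T → Ω → EuclideanSpace ℝ (Fin m))
    (e : Fin N → Fin T → Ω → EuclideanSpace ℝ (Fin K))
    (ebar : Fin T → Ω → EuclideanSpace ℝ (Fin K))
    (hebar : ∀ t ω, ebar t ω = (N : ℝ)⁻¹ • ∑ i, e i t ω)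
    (hf2 : ∀ t, MemLp (f t) 2 μ)
    (he2 : ∀ i t, MemLp (e i t) 2 μ)
    (hindep : ∀ t, IndepFun (f t) (ebar t) μ)
    (Cf Ce : ℝ) (hCf : 0 ≤ Cf) (hCe : 0 ≤ Ce)
    (hMf : (1 / (T : ℝ) ^ (1 + τ)) * ∑ t, ∫ ω, ‖f t ω‖ ^ 2 ∂μ ≤ Cf)
    (hMe : (1 / (T : ℝ)) * ∑ t, ∫ ω, ‖Real.sqrt (N : ℝ) • ebar t ω‖ ^ 2 ∂μ ≤ Ce)
    (ε : ℝ) (hε : 0 < ε) :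
    (μ {ω | Real.sqrt (∑ j, ∑ l,
        ((1 / (T : ℝ) ^ (1 + τ)) * ∑ t, f t ω j * ebar t ω l) ^ 2) > ε}).toReal
      ≤ Real.sqrt (Cf * Ce) / (ε * Real.sqrt (N : ℝ) * (T : ℝ) ^ (τ / 2)) :=
  stmt_0_general μ m K N T hN hT τ f e ebar hebar hf2 he2 Cf Ce hCf hMf hMe ε hε
end

section
/- Let (Ω, ℙ) be a probability space, let m, K, N, T be positive integers and τ ∈ [0, 1). Let f_t : Ω → ℝ^m (t = 1, …, T) and e_{i,t} : Ω → ℝ^K (i = 1, …, N, t = 1, …, T) be square-integrable random vectors, and set ē_t = N^{-1} Σ_{i=1}^N e_{i,t}. Assume that the family (f_1, …, f_T) is independent of the family (e_{i,t})_{i,t}, that the averages are uncorrelated over time, i.e. E⟨ē_t, ē_s⟩ = 0 for all t ≠ s, and that (1/T^{1+τ}) Σ_{t=1}^T E‖f_t‖² ≤ C_f and sup_{1≤t≤T} E(N‖ē_t‖²) ≤ C_e for constants C_f, C_e ≥ 0. Then E ‖ (1/T^{1+τ}) Σ_{t=1}^T f_t ē_t′ ‖_F² ≤ C_e · C_f /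 (N · T^{1+τ}), and consequently for every ε > 0, ℙ( ‖ (1/T^{1+τ}) Σ_{t=1}^T f_t ē_t′ ‖_F > ε ) ≤ C_e · C_f / (ε² · N · T^{1+τ}). In particular the rate improves to N^{-1/2} T^{-(1+τ)/2}. -/
/-!
Expanding the squared Frobenius norm of `∑ₜ fₜ ēₜ′` gives `∑ₜ ∑ₛ ⟨fₜ, fₛ⟩ ⟨ēₜ, ēₛ⟩`.
Independence of the two families factors the expectation of each term into
`E⟨fₜ, fₛ⟩ · E⟨ēₜ, ēₛ⟩`, and serial uncorrelatedness of the averages kills every off-diagonal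
term, leaving `∑ₜ E‖fₜ‖² E‖ēₜ‖² ≤ (C_e / N) ∑ₜ E‖fₜ‖²`. The probability bound is Markov's
inequality applied to the squared norm.
-/

open MeasureTheory ProbabilityTheory Finset
open scoped RealInnerProductSpace

theorem sum_sq_sum_mul_eq_sum_inner_mul_inner {ι J L : Type*} [Fintype ι] [Fintype J]
    [Fintype L] (u : ι → EuclideanSpace ℝ J) (v : ι → EuclideanSpace ℝ L) :
    ∑ j, ∑ l, (∑ t, u t j * v t l) ^ 2 = ∑ t, ∑ s, ⟪u t, u s⟫ * ⟪v t, v s⟫ := by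
  simp only [PiLp.inner_apply, RCLike.inner_apply, conj_trivial, sq, sum_mul_sum]
  simp_rw [sum_comm (s := (univ : Finset J)), sum_comm (s := (univ : Finset L))]
  exact sum_congr rfl fun t _ => sum_congr rfl fun s _ =>
    sum_congr rfl fun j _ => sum_congr rfl fun l _ => by ring

theorem MeasureTheory.MemLp.integrable_inner {Ω E : Type*} [MeasurableSpace Ω] {μ : Measure Ω}
    [NormedAddCommGroup E] [InnerProductSpace ℝ E] {f g : Ω → E} (hf : MemLp f 2 μ)
    (hg : MemLp g 2 μ) : Integrable (fun ω => ⟪f ω, g ω⟫) μ :=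
  (L2.integrable_inner (hf.toLp f) (hg.toLp g)).congr <| by
    filter_upwards [hf.coeFn_toLp, hg.coeFn_toLp] with ω hfω hgω
    rw [hfω, hgω]

theorem measureReal_lt_sqrt_le_integral_div {Ω : Type*} [MeasurableSpace Ω] {μ : Measure Ω}
    [IsFiniteMeasure μ] {S : Ω → ℝ} (hS : 0 ≤ᵐ[μ] S) (hSi : Integrable S μ) {ε : ℝ}
    (hε : 0 < ε) : μ.real {ω | ε < √(S ω)} ≤ (∫ ω, S ω ∂μ) / ε ^ 2 := by
  rw [le_div_iff₀' (by positivity)]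
  calc ε ^ 2 * μ.real {ω | ε < √(S ω)} ≤ ε ^ 2 * μ.real {ω | ε ^ 2 ≤ S ω} := by
        gcongr ε ^ 2 * ?_
        exact measureReal_mono fun ω hω => ((Real.lt_sqrt hε.le).mp hω).le
    _ ≤ ∫ ω, S ω ∂μ := mul_meas_ge_le_integral_of_nonneg hS hSi _

section IndependentFamilies

variable {Ω ι E E' : Type*} [MeasurableSpace Ω] {μ : Measure Ω}
  [NormedAddCommGroup E] [InnerProductSpace ℝ E] [MeasurableSpace E] [BorelSpace E]
  [SecondCountableTopology E]
  [NormedAddCommGroup E'] [InnerProductSpace ℝ E'] [MeasurableSpace E'] [BorelSpace E']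
  [SecondCountableTopology E']
  {F : ι → Ω → E} {G : ι → Ω → E'}

theorem ProbabilityTheory.IndepFun.inner_inner
    (hFG : IndepFun (fun ω t => F t ω) (fun ω t => G t ω) μ) (t s : ι) :
    IndepFun (fun ω => ⟪F t ω, F s ω⟫) (fun ω => ⟪G t ω, G s ω⟫) μ :=
  hFG.comp ((measurable_pi_apply t).inner (measurable_pi_apply s))
    ((measurable_pi_apply t).inner (measurable_pi_apply s))

theorem integrable_inner_mul_inner (hF : ∀ t, MemLp (F t) 2 μ) (hG : ∀ t, MemLp (G t) 2 μ)
    (hFG : IndepFun (fun ω t => F t ω) (fun ω t => G t ω) μ) (t s : ι) :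
    Integrable (fun ω => ⟪F t ω, F s ω⟫ * ⟪G t ω, G s ω⟫) μ :=
  (hFG.inner_inner t s).integrable_mul ((hF t).integrable_inner (hF s))
    ((hG t).integrable_inner (hG s))

theorem integral_sum_inner_mul_inner_of_uncorrelated [Fintype ι] (hF : ∀ t, MemLp (F t) 2 μ)
    (hG : ∀ t, MemLp (G t) 2 μ) (hFG : IndepFun (fun ω t => F t ω) (fun ω t => G t ω) μ)
    (hG_uncorr : ∀ t s, t ≠ s → ∫ ω, ⟪G t ω, G s ω⟫ ∂μ = 0) :
    ∫ ω, ∑ t, ∑ s, ⟪F t ω, F s ω⟫ * ⟪G t ω, G s ω⟫ ∂μ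
      = ∑ t, (∫ ω, ‖F t ω‖ ^ 2 ∂μ) * ∫ ω, ‖G t ω‖ ^ 2 ∂μ := by
  have hint := integrable_inner_mul_inner hF hG hFG
  have hfactor : ∀ t s, ∫ ω, ⟪F t ω, F s ω⟫ * ⟪G t ω, G s ω⟫ ∂μ
      = (∫ ω, ⟪F t ω, F s ω⟫ ∂μ) * ∫ ω, ⟪G t ω, G s ω⟫ ∂μ := fun t s =>
    (hFG.inner_inner t s).integral_fun_mul_eq_mul_integral
      ((hF t).integrable_inner (hF s)).aestronglyMeasurable
      ((hG t).integrable_inner (hG s)).aestronglyMeasurable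
  rw [integral_finsetSum _ fun t _ => integrable_finsetSum _ fun s _ => hint t s]
  refine sum_congr rfl fun t _ => ?_
  rw [integral_finsetSum _ fun s _ => hint t s,
    sum_eq_single t (fun s _ hst => by rw [hfactor, hG_uncorr t s hst.symm, mul_zero])
      (fun ht => absurd (mem_univ t) ht), hfactor]
  simp only [real_inner_self_eq_norm_sq]

theorem integral_sum_inner_mul_inner_le_of_uncorrelated [Fintype ι]
    (hF : ∀ t, MemLp (F t) 2 μ) (hG : ∀ t, MemLp (G t) 2 μ)
    (hFG : IndepFun (fun ω t => F t ω) (fun ω t => G t ω) μ)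
    (hG_uncorr : ∀ t s, t ≠ s → ∫ ω, ⟪G t ω, G s ω⟫ ∂μ = 0) {C : ℝ}
    (hG_sq : ∀ t, ∫ ω, ‖G t ω‖ ^ 2 ∂μ ≤ C) :
    ∫ ω, ∑ t, ∑ s, ⟪F t ω, F s ω⟫ * ⟪G t ω, G s ω⟫ ∂μ ≤ C * ∑ t, ∫ ω, ‖F t ω‖ ^ 2 ∂μ := by
  rw [integral_sum_inner_mul_inner_of_uncorrelated hF hG hFG hG_uncorr, mul_sum]
  refine sum_le_sum fun t _ => ?_
  rw [mul_comm C]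
  exact mul_le_mul_of_nonneg_left (hG_sq t) (integral_nonneg fun ω => by positivity)

end IndependentFamilies

theorem stmt_1_general {Ω : Type*} [MeasurableSpace Ω] (μ : Measure Ω) [IsProbabilityMeasure μ]
    (m K N T : ℕ) (hN : 0 < N)
    (τ : ℝ)
    (f : Fin T → Ω → EuclideanSpace ℝ (Fin m))
    (e : Fin N → Fin T → Ω → EuclideanSpace ℝ (Fin K))
    (ebar : Fin T → Ω → EuclideanSpace ℝ (Fin K))
    (hebar : ∀ t ω, ebar t ω = (N : ℝ)⁻¹ • ∑ i, e i t ω)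
    (hf2 : ∀ t, MemLp (f t) 2 μ)
    (he2 : ∀ i t, MemLp (e i t) 2 μ)
    (hindep : IndepFun (fun ω t => f t ω) (fun ω (i : Fin N) (t : Fin T) => e i t ω) μ)
    (huncorr : ∀ t s : Fin T, t ≠ s →
      ∫ ω, (inner ℝ (ebar t ω) (ebar s ω) : ℝ) ∂μ = 0)
    (Cf Ce : ℝ) (hCe : 0 ≤ Ce)
    (hMf : (1 / (T : ℝ) ^ (1 + τ)) * ∑ t, ∫ ω, ‖f t ω‖ ^ 2 ∂μ ≤ Cf)
    (hMe : ∀ t, ∫ ω, (N : ℝ) * ‖ebar t ω‖ ^ 2 ∂μ ≤ Ce) :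
    (∫ ω, ∑ j, ∑ l,
        ((1 / (T : ℝ) ^ (1 + τ)) * ∑ t, f t ω j * ebar t ω l) ^ 2 ∂μ
      ≤ Ce * Cf / ((N : ℝ) * (T : ℝ) ^ (1 + τ))) ∧
    ∀ ε : ℝ, 0 < ε →
      (μ {ω | Real.sqrt (∑ j, ∑ l,
          ((1 / (T : ℝ) ^ (1 + τ)) * ∑ t, f t ω j * ebar t ω l) ^ 2) > ε}).toReal
        ≤ Ce * Cf / (ε ^ 2 * (N : ℝ) * (T : ℝ) ^ (1 + τ)) := by
  have hebar_memLp : ∀ t, MemLp (ebar t) 2 μ := fun t => by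
    rw [funext (hebar t)]
    exact (memLp_finsetSum _ fun i _ => he2 i t).const_smul ((N : ℝ)⁻¹)
  have hindep_ebar : IndepFun (fun ω t => f t ω) (fun ω t => ebar t ω) μ := by
    simp only [hebar]
    exact hindep.comp measurable_id (by fun_prop : Measurable
      fun (x : Fin N → Fin T → EuclideanSpace ℝ (Fin K)) t => (N : ℝ)⁻¹ • ∑ i, x i t)
  have hebar_sq : ∀ t, ∫ ω, ‖ebar t ω‖ ^ 2 ∂μ ≤ Ce / N := fun t => by
    rw [le_div_iff₀' (by exact_mod_cast hN), ← integral_const_mul]; exact hMe t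
  set a : ℝ := 1 / (T : ℝ) ^ (1 + τ)
  set S : Ω → ℝ := fun ω => ∑ j, ∑ l, (a * ∑ t, f t ω j * ebar t ω l) ^ 2
  have hS : S = fun ω => a ^ 2 * ∑ t, ∑ s, ⟪f t ω, f s ω⟫ * ⟪ebar t ω, ebar s ω⟫ := by
    ext ω
    simp only [S, mul_pow, ← mul_sum, sum_sq_sum_mul_eq_sum_inner_mul_inner]
  have hS_int : Integrable S μ := hS ▸ (integrable_finsetSum _ fun t _ =>
    integrable_finsetSum _ fun s _ =>
      integrable_inner_mul_inner hf2 hebar_memLp hindep_ebar t s).const_mul _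
  have hmoment : ∫ ω, S ω ∂μ ≤ Ce * Cf / ((N : ℝ) * (T : ℝ) ^ (1 + τ)) :=
    calc ∫ ω, S ω ∂μ
        = a ^ 2 * ∫ ω, ∑ t, ∑ s, ⟪f t ω, f s ω⟫ * ⟪ebar t ω, ebar s ω⟫ ∂μ := by
          rw [hS, integral_const_mul]
      _ ≤ a ^ 2 * (Ce / N * ∑ t, ∫ ω, ‖f t ω‖ ^ 2 ∂μ) := by
          gcongr
          exact integral_sum_inner_mul_inner_le_of_uncorrelated hf2 hebar_memLp hindep_ebar
            huncorr hebar_sq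
      _ = a * (Ce / N) * (a * ∑ t, ∫ ω, ‖f t ω‖ ^ 2 ∂μ) := by ring
      _ ≤ a * (Ce / N) * Cf := by gcongr
      _ = Ce * Cf / ((N : ℝ) * (T : ℝ) ^ (1 + τ)) := by ring
  refine ⟨hmoment, fun ε hε => ?_⟩
  calc μ.real {ω | ε < √(S ω)} ≤ (∫ ω, S ω ∂μ) / ε ^ 2 :=
        measureReal_lt_sqrt_le_integral_div (.of_forall fun ω => by positivity) hS_int hε
    _ ≤ Ce * Cf / ((N : ℝ) * (T : ℝ) ^ (1 + τ)) / ε ^ 2 := by gcongr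
    _ = Ce * Cf / (ε ^ 2 * (N : ℝ) * (T : ℝ) ^ (1 + τ)) := by ring

/-- Corollary A.1: sharper rate under serially uncorrelated cross-section averages. -/
theorem stmt_1 {Ω : Type*} [MeasurableSpace Ω] (μ : Measure Ω) [IsProbabilityMeasure μ]
    (m K N T : ℕ) (hm : 0 < m) (hK : 0 < K) (hN : 0 < N) (hT : 0 < T)
    (τ : ℝ) (hτ0 : 0 ≤ τ) (hτ1 : τ < 1)
    (f : Fin T → Ω → EuclideanSpace ℝ (Fin m))
    (e : Fin N → Fin T → Ω → EuclideanSpace ℝ (Fin K))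
    (ebar : Fin T → Ω → EuclideanSpace ℝ (Fin K))
    (hebar : ∀ t ω, ebar t ω = (N : ℝ)⁻¹ • ∑ i, e i t ω)
    (hf2 : ∀ t, MemLp (f t) 2 μ)
    (he2 : ∀ i t, MemLp (e i t) 2 μ)
    (hindep : IndepFun (fun ω t => f t ω) (fun ω (i : Fin N) (t : Fin T) => e i t ω) μ)
    (huncorr : ∀ t s : Fin T, t ≠ s →
      ∫ ω, (inner ℝ (ebar t ω) (ebar s ω) : ℝ) ∂μ = 0)
    (Cf Ce : ℝ) (hCf : 0 ≤ Cf) (hCe : 0 ≤ Ce)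
    (hMf : (1 / (T : ℝ) ^ (1 + τ)) * ∑ t, ∫ ω, ‖f t ω‖ ^ 2 ∂μ ≤ Cf)
    (hMe : ∀ t, ∫ ω, (N : ℝ) * ‖ebar t ω‖ ^ 2 ∂μ ≤ Ce) :
    (∫ ω, ∑ j, ∑ l,
        ((1 / (T : ℝ) ^ (1 + τ)) * ∑ t, f t ω j * ebar t ω l) ^ 2 ∂μ
      ≤ Ce * Cf / ((N : ℝ) * (T : ℝ) ^ (1 + τ))) ∧
    ∀ ε : ℝ, 0 < ε →
      (μ {ω | Real.sqrt (∑ j, ∑ l,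
          ((1 / (T : ℝ) ^ (1 + τ)) * ∑ t, f t ω j * ebar t ω l) ^ 2) > ε}).toReal
        ≤ Ce * Cf / (ε ^ 2 * (N : ℝ) * (T : ℝ) ^ (1 + τ)) :=
  stmt_1_general μ m K N T hN τ f e ebar hebar hf2 he2 hindep huncorr Cf Ce hCe hMf hMe
end
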